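/- arXiv:0903.4871 — 9 statements merged into one kernel-verified Lean document; each statement's English description precedes it below -/
import Mathlib

section
/- Let V be a real vector space with a symmetric bilinear form ⟨·,·⟩ and a trilinear bracket [·,·,·] satisfying the orthogonality condition ⟨[x,y,u],v⟩ + ⟨u,[x,y,v]⟩ = 0 and the symmetry condition ⟨[x,y,u],v⟩ = ⟨[u,v,x],y⟩ for all x, y, u, v ∈ V. Let D : V ⊗ V → End(V) be determined by D(x⊗y)(z) = [x,y,z] and let End(V) act on V ⊗ V by ψ·(x⊗y) = ψ(x)⊗y + x⊗ψ(y). If ψ ∈ End(V) is skew-adjoint, i.e. ⟨ψ(u),v⟩ + ⟨u,ψ(v)⟩ = 0 for all u, v ∈ V, then the linear map dψ : V ⊗ V → End(V) defined by dψ(X) = −ψ∘D(X) + D(X)∘ψ + D(ψ·X) again satisfies the symmetry condition: ⟨dψ(u⊗v)(x), y⟩ = ⟨dψ(x⊗y)(u), v⟩ for all u, v, x, y ∈ V. -/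
open TensorProduct

/-- For a trilinear bracket on `(V, ⟨·,·⟩)` satisfying the orthogonality
and symmetry conditions, and a skew-adjoint `ψ ∈ End(V)`, the 1-coboundary
`dψ(X) = −ψ∘D(X) + D(X)∘ψ + D(ψ·X)` again satisfies the symmetry condition
`⟨dψ(u⊗v)x, y⟩ = ⟨dψ(x⊗y)u, v⟩`. -/
theorem coboundary_of_skew_preserves_symmetry
    (V : Type*) [AddCommGroup V] [Module ℝ V]
    (g : V →ₗ[ℝ] V →ₗ[ℝ] ℝ)
    (hgsymm : ∀ x y : V, g x y = g y x)
    (t : V →ₗ[ℝ] V →ₗ[ℝ] V →ₗ[ℝ] V)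
    (horth : ∀ x y u v : V, g (t x y u) v + g u (t x y v) = 0)
    (hsym : ∀ x y u v : V, g (t x y u) v = g (t u v x) y)
    (D : TensorProduct ℝ V V →ₗ[ℝ] Module.End ℝ V)
    (hD : ∀ x y z : V, D (x ⊗ₜ[ℝ] y) z = t x y z)
    (act : Module.End ℝ V → (TensorProduct ℝ V V →ₗ[ℝ] TensorProduct ℝ V V))
    (hact : ∀ (ψ : Module.End ℝ V) (x y : V),
      act ψ (x ⊗ₜ[ℝ] y) = (ψ x) ⊗ₜ[ℝ] y + x ⊗ₜ[ℝ] (ψ y))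
    (ψ : Module.End ℝ V)
    (hψ : ∀ u v : V, g (ψ u) v + g u (ψ v) = 0) :
    ∀ u v x y : V,
      g ((-(ψ ∘ₗ D (u ⊗ₜ[ℝ] v)) + D (u ⊗ₜ[ℝ] v) ∘ₗ ψ + D (act ψ (u ⊗ₜ[ℝ] v))) x) y =
      g ((-(ψ ∘ₗ D (x ⊗ₜ[ℝ] y)) + D (x ⊗ₜ[ℝ] y) ∘ₗ ψ + D (act ψ (x ⊗ₜ[ℝ] y))) u) v := by
  intro u v x y
  simp only [hact, map_add, LinearMap.add_apply, LinearMap.neg_apply, LinearMap.comp_apply,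
    hD, map_neg, LinearMap.map_add₂, LinearMap.map_neg₂]
  linear_combination -hψ (t u v x) y - hsym x (ψ y) u v - hsym (ψ x) y u v
    - hsym x y (ψ u) v - hsym x y u (ψ v) + hψ (t x y u) v
end

section
/- Let V be a 3-Leibniz algebra with associated Leibniz algebra L = V ⊗ V, and let D : V ⊗ V → End(V) be determined by D(x⊗y)(z) = [x,y,z], with End(V) acting on V ⊗ V by ψ·(x⊗y) = ψ(x)⊗y + x⊗ψ(y). Define a left action of L on End(V) by [X,ψ] = D(X)∘ψ − ψ∘D(X) and a right action by [ψ,X] = ψ∘D(X) − D(X)∘ψ − D(ψ·X). Then these actions make End(V) a representation of the Leibniz algebra L: the conditions [[X,Y],ψ] = [X,[Y,ψ]] − [Y,[X,ψ]], [[X,ψ],Y] = [X,[ψ,Y]] − [ψ,[X,Y]], and [[ψ,X],Y] = [ψ,[X,Y]] − [X,[ψ,Y]] hold for all X, Y ∈ L and ψ ∈ End(V). -/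
open TensorProduct

/-- For a 3-Leibniz algebra `V` with associated Leibniz algebra
`L = V ⊗ V`, the actions `[X,ψ] = D(X)∘ψ − ψ∘D(X)` and
`[ψ,X] = ψ∘D(X) − D(X)∘ψ − D(ψ·X)` make `End(V)` a representation of `L`. -/
theorem endV_is_representation
    (V : Type*) [AddCommGroup V] [Module ℝ V]
    (t : V →ₗ[ℝ] V →ₗ[ℝ] V →ₗ[ℝ] V)
    (hFI : ∀ x y u v z : V,
      t x y (t u v z) = t (t x y u) v z + t u (t x y v) z + t u v (t x y z))
    (B : TensorProduct ℝ V V →ₗ[ℝ] TensorProduct ℝ V V →ₗ[ℝ] TensorProduct ℝ V V)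
    (hB : ∀ x y u v : V,
      B (x ⊗ₜ[ℝ] y) (u ⊗ₜ[ℝ] v) = (t x y u) ⊗ₜ[ℝ] v + u ⊗ₜ[ℝ] (t x y v))
    (D : TensorProduct ℝ V V →ₗ[ℝ] Module.End ℝ V)
    (hD : ∀ x y z : V, D (x ⊗ₜ[ℝ] y) z = t x y z)
    (act : Module.End ℝ V → (TensorProduct ℝ V V →ₗ[ℝ] TensorProduct ℝ V V))
    (hact : ∀ (ψ : Module.End ℝ V) (x y : V),
      act ψ (x ⊗ₜ[ℝ] y) = (ψ x) ⊗ₜ[ℝ] y + x ⊗ₜ[ℝ] (ψ y))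
    (lact : TensorProduct ℝ V V → Module.End ℝ V → Module.End ℝ V)
    (ract : Module.End ℝ V → TensorProduct ℝ V V → Module.End ℝ V)
    (hlact : ∀ (X : TensorProduct ℝ V V) (ψ : Module.End ℝ V),
      lact X ψ = D X ∘ₗ ψ - ψ ∘ₗ D X)
    (hract : ∀ (ψ : Module.End ℝ V) (X : TensorProduct ℝ V V),
      ract ψ X = ψ ∘ₗ D X - D X ∘ₗ ψ - D (act ψ X)) :
    ∀ (X Y : TensorProduct ℝ V V) (ψ : Module.End ℝ V),
      (lact (B X Y) ψ = lact X (lact Y ψ) - lact Y (lact X ψ)) ∧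
      (ract (lact X ψ) Y = lact X (ract ψ Y) - ract ψ (B X Y)) ∧
      (ract (ract ψ X) Y = ract ψ (B X Y) - lact X (ract ψ Y)) := by
  have hDB : ∀ X Y : TensorProduct ℝ V V,
      D (B X Y) = D X ∘ₗ D Y - D Y ∘ₗ D X := by
    intro X Y
    induction X using TensorProduct.induction_on with
    | zero => simp
    | tmul x y =>
      induction Y using TensorProduct.induction_on with
      | zero => simp
      | tmul u v =>
        ext z
        simp only [hB, map_add, hD, LinearMap.sub_apply, LinearMap.comp_apply,
          LinearMap.add_apply]
        rw [hFI x y u v z]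
        abel
      | add Y1 Y2 h1 h2 =>
        ext z
        simp only [map_add, h1, h2, LinearMap.sub_apply, LinearMap.comp_apply,
          LinearMap.add_apply, map_add]
        abel
    | add X1 X2 h1 h2 =>
      ext z
      simp only [map_add, h1, h2, LinearMap.sub_apply, LinearMap.comp_apply,
        LinearMap.add_apply, map_add]
      abel
  have act_eq : ∀ φ : Module.End ℝ V,
      act φ = LinearMap.rTensor V φ + LinearMap.lTensor V φ := by
    intro φ
    apply TensorProduct.ext'
    intro x y
    simp [hact]
  have LA : ∀ (ψ : Module.End ℝ V) (X Y : TensorProduct ℝ V V),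
      act (D X ∘ₗ ψ - ψ ∘ₗ D X) Y = B X (act ψ Y) - act ψ (B X Y) := by
    intro ψ X Y
    simp only [act_eq]
    induction X using TensorProduct.induction_on with
    | zero => simp
    | tmul x y =>
      induction Y using TensorProduct.induction_on with
      | zero => simp
      | tmul u v =>
        simp only [LinearMap.add_apply, LinearMap.rTensor_tmul, LinearMap.lTensor_tmul,
          LinearMap.sub_apply, LinearMap.comp_apply, hD, hB, map_add, sub_tmul, tmul_sub]
        abel
      | add Y1 Y2 h1 h2 =>
        simp only [map_add, h1, h2]
        abel
    | add X1 X2 h1 h2 =>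
      have h := congrArg₂ (· + ·) h1 h2
      simp only [map_add, LinearMap.add_apply, LinearMap.sub_apply, LinearMap.add_comp,
        LinearMap.comp_add, LinearMap.rTensor_add, LinearMap.lTensor_add,
        LinearMap.rTensor_sub, LinearMap.lTensor_sub, map_sub] at h ⊢
      abel_nf at h ⊢
      exact h
  have LB : ∀ (ψ : Module.End ℝ V) (X Y : TensorProduct ℝ V V),
      act (ψ ∘ₗ D X - D X ∘ₗ ψ - D (act ψ X)) Y
        = act ψ (B X Y) - B (act ψ X) Y - B X (act ψ Y) := by
    intro ψ X Y
    simp only [act_eq]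
    induction X using TensorProduct.induction_on with
    | zero => simp
    | tmul x y =>
      induction Y using TensorProduct.induction_on with
      | zero => simp
      | tmul u v =>
        simp only [LinearMap.add_apply, LinearMap.rTensor_tmul, LinearMap.lTensor_tmul,
          LinearMap.sub_apply, LinearMap.comp_apply, hD, hB, map_add, sub_tmul, tmul_sub,
          add_tmul, tmul_add, LinearMap.add_apply]
        abel
      | add Y1 Y2 h1 h2 =>
        simp only [map_add, h1, h2]
        abel
    | add X1 X2 h1 h2 =>
      have h := congrArg₂ (· + ·) h1 h2
      simp only [map_add, LinearMap.add_apply, LinearMap.sub_apply, LinearMap.add_comp,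
        LinearMap.comp_add, LinearMap.rTensor_add, LinearMap.lTensor_add,
        LinearMap.rTensor_sub, LinearMap.lTensor_sub, map_sub] at h ⊢
      abel_nf at h ⊢
      exact h
  intro X Y ψ
  refine ⟨?_, ?_, ?_⟩
  · simp only [hlact, hDB]
    ext z
    simp only [LinearMap.sub_apply, LinearMap.comp_apply, map_sub]
    abel
  · simp only [hract, hlact]
    rw [LA ψ X Y]
    simp only [map_sub, hDB]
    ext z
    simp only [LinearMap.sub_apply, LinearMap.comp_apply, map_sub]
    abel
  · simp only [hract, hlact]
    rw [LB ψ X Y]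
    simp only [map_sub, hDB]
    ext z
    simp only [LinearMap.sub_apply, LinearMap.comp_apply, map_sub]
    abel
end

section
/- Let V be a 3-Leibniz algebra with associated Leibniz algebra L = V ⊗ V, D : L → End(V) determined by D(x⊗y)(z) = [x,y,z], and End(V) the representation of L with actions [X,ψ] = D(X)∘ψ − ψ∘D(X) and [ψ,X] = ψ∘D(X) − D(X)∘ψ − D(ψ·X). Suppose φ : L → End(V) is a linear map which is a 1-cocycle: [X,φ(Y)] + [φ(X),Y] − φ([X,Y]) = 0 for all X, Y ∈ L. Define the bilinear map ξ : L × L → End(V) by ξ(X,Y) = φ(φ(X)·Y) − (φ(X)∘φ(Y) − φ(Y)∘φ(X)). Then ξ is a 2-cocycle: [X,ξ(Y,Z)] − [Y,ξ(X,Z)] − [ξ(X,Y),Z] + ξ(X,[Y,Z]) − ξ(Y,[X,Z]) − ξ([X,Y],Z) = 0 for all X, Y, Z ∈ L. -/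
open TensorProduct

/-- If `φ : L → End(V)` is a 1-cocycle of the Leibniz algebra
`L = V ⊗ V` with values in `End(V)`, then
`ξ(X,Y) = φ(φ(X)·Y) − [φ(X),φ(Y)]` is a 2-cocycle. -/
theorem obstruction_is_two_cocycle
    (V : Type*) [AddCommGroup V] [Module ℝ V]
    (t : V →ₗ[ℝ] V →ₗ[ℝ] V →ₗ[ℝ] V)
    (hFI : ∀ x y u v z : V,
      t x y (t u v z) = t (t x y u) v z + t u (t x y v) z + t u v (t x y z))
    (B : TensorProduct ℝ V V →ₗ[ℝ] TensorProduct ℝ V V →ₗ[ℝ] TensorProduct ℝ V V)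
    (hB : ∀ x y u v : V,
      B (x ⊗ₜ[ℝ] y) (u ⊗ₜ[ℝ] v) = (t x y u) ⊗ₜ[ℝ] v + u ⊗ₜ[ℝ] (t x y v))
    (D : TensorProduct ℝ V V →ₗ[ℝ] Module.End ℝ V)
    (hD : ∀ x y z : V, D (x ⊗ₜ[ℝ] y) z = t x y z)
    (act : Module.End ℝ V → (TensorProduct ℝ V V →ₗ[ℝ] TensorProduct ℝ V V))
    (hact : ∀ (ψ : Module.End ℝ V) (x y : V),
      act ψ (x ⊗ₜ[ℝ] y) = (ψ x) ⊗ₜ[ℝ] y + x ⊗ₜ[ℝ] (ψ y))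
    (lact : TensorProduct ℝ V V → Module.End ℝ V → Module.End ℝ V)
    (ract : Module.End ℝ V → TensorProduct ℝ V V → Module.End ℝ V)
    (hlact : ∀ (X : TensorProduct ℝ V V) (ψ : Module.End ℝ V),
      lact X ψ = D X ∘ₗ ψ - ψ ∘ₗ D X)
    (hract : ∀ (ψ : Module.End ℝ V) (X : TensorProduct ℝ V V),
      ract ψ X = ψ ∘ₗ D X - D X ∘ₗ ψ - D (act ψ X))
    (φ : TensorProduct ℝ V V →ₗ[ℝ] Module.End ℝ V)
    (hcocycle : ∀ X Y : TensorProduct ℝ V V,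
      lact X (φ Y) + ract (φ X) Y - φ (B X Y) = 0)
    (ξ : TensorProduct ℝ V V → TensorProduct ℝ V V → Module.End ℝ V)
    (hξ : ∀ X Y : TensorProduct ℝ V V,
      ξ X Y = φ (act (φ X) Y) - (φ X ∘ₗ φ Y - φ Y ∘ₗ φ X)) :
    ∀ X Y Z : TensorProduct ℝ V V,
      lact X (ξ Y Z) - lact Y (ξ X Z) - ract (ξ X Y) Z
        + ξ X (B Y Z) - ξ Y (B X Z) - ξ (B X Y) Z = 0 := by

  intro X Y Z
  have act_addE : ∀ ψ χ : Module.End ℝ V, act (ψ + χ) = act ψ + act χ := by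
    intro ψ χ
    apply TensorProduct.ext'
    intro x y
    simp only [hact, LinearMap.add_apply, add_tmul, tmul_add]
    abel
  have act_subE : ∀ ψ χ : Module.End ℝ V, act (ψ - χ) = act ψ - act χ := by
    intro ψ χ
    apply TensorProduct.ext'
    intro x y
    simp only [hact, LinearMap.sub_apply, sub_tmul, tmul_sub]
    abel
  have act_zeroE : act 0 = 0 := by
    apply TensorProduct.ext'
    intro x y
    simp [hact]
  have act_commE : ∀ ψ χ : Module.End ℝ V,
      act (ψ ∘ₗ χ - χ ∘ₗ ψ) = act ψ ∘ₗ act χ - act χ ∘ₗ act ψ := by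
    intro ψ χ
    apply TensorProduct.ext'
    intro x y
    simp only [hact, LinearMap.sub_apply, LinearMap.comp_apply, sub_tmul, tmul_sub,
      map_add, hact]
    abel
  have P2 : ∀ W, act (D W) = B W := by
    intro W
    induction W using TensorProduct.induction_on with
    | zero => simp only [map_zero]; exact act_zeroE
    | tmul x y =>
        apply TensorProduct.ext'
        intro u v
        rw [hact, hD, hD, hB]
    | add W1 W2 h1 h2 => rw [map_add, act_addE, h1, h2, map_add]
  have P2' : ∀ W Z : TensorProduct ℝ V V, act (D W) Z = B W Z := by
    intro W Z; rw [P2]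
  have hC : ∀ U W : TensorProduct ℝ V V,
      φ (B U W) = (D U ∘ₗ φ W - φ W ∘ₗ D U)
        + ((φ U ∘ₗ D W - D W ∘ₗ φ U) - D (act (φ U) W)) := by
    intro U W
    have h := hcocycle U W
    rw [hlact, hract] at h
    exact (sub_eq_zero.mp h).symm
  have act_hC : ∀ (a b c d e : Module.End ℝ V) (W : TensorProduct ℝ V V),
      act ((a ∘ₗ b - b ∘ₗ a) + ((c ∘ₗ d - d ∘ₗ c) - e)) W
        = (act a (act b W) - act b (act a W))
          + ((act c (act d W) - act d (act c W)) - act e W) := by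
    intro a b c d e W
    rw [act_addE, act_commE, act_subE, act_commE]
    simp [LinearMap.add_apply, LinearMap.sub_apply, LinearMap.comp_apply]
  have act_sub_comm : ∀ (p a b : Module.End ℝ V) (W : TensorProduct ℝ V V),
      act (p - (a ∘ₗ b - b ∘ₗ a)) W
        = act p W - (act a (act b W) - act b (act a W)) := by
    intro p a b W
    rw [act_subE, act_commE]
    simp [LinearMap.sub_apply, LinearMap.comp_apply]
  simp only [hξ, hlact, hract, hC, act_hC, act_sub_comm, P2', map_add, map_sub]
  simp only [← Module.End.mul_eq_comp]
  noncomm_ring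
end

section
/- Let L be a (left) Leibniz algebra, regarded as a representation of itself via its bracket, and let End(L) be the representation of L with left action [X,ψ](Y) = [X,ψ(Y)] − ψ([X,Y]) and right action [ψ,X](Y) = −[X,ψ(Y)] − [ψ(X),Y] + ψ([X,Y]). For every p ≥ 0, the linear isomorphism sending a p-multilinear map φ : L^p → End(L) to the (p+1)-multilinear map Φ : L^{p+1} → L defined by Φ(X₁,…,X_p,Y) = φ(X₁,…,X_p)(Y) is a chain map: (dφ)(X₁,…,X_{p+1})(X_{p+2}) = (dΦ)(X₁,…,X_{p+2}) for all X₁,…,X_{p+2} ∈ L. -/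
/-- The Leibniz cohomology differential of a `p`-cochain `φ` with values in a
representation `M` of a Leibniz algebra, with left action `lact`, right action `ract`
and bracket `b` (0-indexed form of Loday–Pirashvili's formula):
`(dφ)(X₁,…,X_{p+1}) = Σ_{i=1}^{p} (−1)^{i−1}[X_i, φ(…,X̂_i,…)]
  + (−1)^{p+1}[φ(X₁,…,X_p), X_{p+1}]
  + Σ_{1≤i<j≤p+1} (−1)^i φ(…,X̂_i,…,[X_i,X_j],…)`. -/
def leibnizDiff {L M : Type*} [AddCommGroup L] [AddCommGroup M]
    (b : L → L → L) (lact : L → M → M) (ract : M → L → M)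
    {p : ℕ} (φ : (Fin p → L) → M) : (Fin (p + 1) → L) → M :=
  fun X =>
    (∑ i : Fin p, ((-1 : ℤ) ^ (i : ℕ)) •
        lact (X i.castSucc) (φ (X ∘ (i.castSucc).succAbove)))
    + ((-1 : ℤ) ^ (p + 1)) • ract (φ (fun k => X k.castSucc)) (X (Fin.last p))
    + ∑ i : Fin (p + 1), ∑ j : Fin (p + 1),
        if (i : ℕ) < (j : ℕ) then
          ((-1 : ℤ) ^ ((i : ℕ) + 1)) •
            φ (Function.update X j (b (X i) (X j)) ∘ i.succAbove)
        else 0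

/-- For a (left) Leibniz algebra `L`, the isomorphism sending a
`p`-multilinear map `φ : Lᵖ → End(L)` to the `(p+1)`-multilinear map
`Φ(X₁,…,X_p,Y) = φ(X₁,…,X_p)(Y)` is a chain map:
`(dφ)(X₁,…,X_{p+1})(X_{p+2}) = (dΦ)(X₁,…,X_{p+2})`, where `End(L)` carries the
actions `[X,ψ] = b(X)∘ψ − ψ∘b(X)` and `[ψ,X] = ψ∘b(X) − b(X)∘ψ − b(ψ(X))`, and `L`
is a representation of itself via its bracket. -/
theorem chain_map_endL
    (L : Type*) [AddCommGroup L] [Module ℝ L]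
    (b : L →ₗ[ℝ] L →ₗ[ℝ] L)
    (leib : ∀ X Y Z : L, b X (b Y Z) = b (b X Y) Z + b Y (b X Z))
    (p : ℕ)
    (φ : MultilinearMap ℝ (fun _ : Fin p => L) (Module.End ℝ L))
    (Φ : (Fin (p + 1) → L) → L)
    (hΦ : ∀ X : Fin (p + 1) → L, Φ X = φ (fun k => X k.castSucc) (X (Fin.last p))) :
    ∀ X : Fin (p + 2) → L,
      leibnizDiff (fun x y => b x y)
          (fun x ψ => b x ∘ₗ ψ - ψ ∘ₗ b x)
          (fun ψ x => ψ ∘ₗ b x - b x ∘ₗ ψ - b (ψ x))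
          (fun Y => φ Y) (fun k => X k.castSucc) (X (Fin.last (p + 1)))
        = leibnizDiff (fun x y => b x y) (fun x y => b x y) (fun m x => b m x)
            Φ X := by
  intro X
  simp only [leibnizDiff, hΦ, LinearMap.add_apply, LinearMap.sub_apply,
    LinearMap.comp_apply, LinearMap.smul_apply, LinearMap.sum_apply,
    apply_ite (fun f : Module.End ℝ L => f (X (Fin.last (p+1)))), LinearMap.zero_apply]
  have hsucclast : ∀ x : Fin (p+1), (x.castSucc).succAbove (Fin.last p) = Fin.last (p+1) := by
    intro x
    rw [Fin.succAbove_castSucc_of_le x (Fin.last p) (Fin.le_last x), Fin.succ_last]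
  have hsA : ∀ x : Fin (p+1), (X ∘ (x.castSucc).succAbove) (Fin.last p) = X (Fin.last (p+1)) := by
    intro x; simp only [Function.comp_apply, hsucclast]
  have hfun1 : ∀ x : Fin p,
      (fun k : Fin p => (X ∘ ((x.castSucc).castSucc).succAbove) k.castSucc)
        = (fun k => X k.castSucc) ∘ (x.castSucc).succAbove := by
    intro x; funext k
    simp only [Function.comp_apply, Fin.castSucc_succAbove_castSucc]
  have hfun2 : (fun k : Fin p => (X ∘ ((Fin.last p).castSucc).succAbove) k.castSucc)
      = fun k : Fin p => X k.castSucc.castSucc := by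
    funext k
    simp only [Function.comp_apply, Fin.castSucc_succAbove_castSucc, Fin.succAbove_last]
  have hup1 : ∀ x x1 : Fin (p+1),
      (fun k : Fin p =>
        (Function.update X x1.castSucc (b (X x.castSucc) (X x1.castSucc)) ∘ (x.castSucc).succAbove) k.castSucc)
      = Function.update (fun k => X k.castSucc) x1 (b (X x.castSucc) (X x1.castSucc)) ∘ x.succAbove := by
    intro x x1; funext k
    simp only [Function.comp_apply]
    rw [Fin.castSucc_succAbove_castSucc]
    rcases eq_or_ne (x.succAbove k) x1 with h | h
    · rw [h, Function.update_self, Function.update_self]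
    · rw [Function.update_of_ne (fun hc => h (Fin.castSucc_inj.mp hc)),
        Function.update_of_ne h]
  have hup2 : ∀ (x x1 : Fin (p+1)) (v : L),
      (Function.update X x1.castSucc v ∘ (x.castSucc).succAbove) (Fin.last p)
        = X (Fin.last (p+1)) := by
    intro x x1 v
    simp only [Function.comp_apply]
    rw [hsucclast]
    refine Function.update_of_ne ?_ _ _
    simp only [ne_eq, Fin.ext_iff, Fin.val_last, Fin.coe_castSucc]
    omega
  have hup3 : ∀ (x : Fin (p+1)) (v : L),
      (Function.update X (Fin.last (p+1)) v ∘ (x.castSucc).succAbove) (Fin.last p) = v := by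
    intro x v
    simp only [Function.comp_apply]
    rw [hsucclast, Function.update_self]
  have hup4 : ∀ (x : Fin (p+1)) (v : L),
      (fun k : Fin p =>
        (Function.update X (Fin.last (p+1)) v ∘ (x.castSucc).succAbove) k.castSucc)
      = (fun k => X k.castSucc) ∘ x.succAbove := by
    intro x v; funext k
    simp only [Function.comp_apply]
    rw [Fin.castSucc_succAbove_castSucc]
    refine Function.update_of_ne ?_ _ _
    have := (x.succAbove k).isLt
    simp only [ne_eq, Fin.ext_iff, Fin.val_last, Fin.coe_castSucc]
    omega
  simp only [hsA]
  -- split R1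
  rw [Fin.sum_univ_castSucc (f := fun x : Fin (p+1) => ((-1:ℤ)) ^ (x:ℕ) •
    (b (X x.castSucc)) ((φ fun k => (X ∘ (x.castSucc).succAbove) k.castSucc)
      (X (Fin.last (p+1)))))]
  -- split R3 (outer, then inner)
  conv_rhs =>
    rw [Fin.sum_univ_castSucc
      (f := fun x : Fin (p+2) => ∑ x1 : Fin (p+2),
        if (x:ℕ) < (x1:ℕ) then
          ((-1:ℤ)) ^ ((x:ℕ) + 1) •
            (φ fun k => (Function.update X x1 (b (X x) (X x1)) ∘ x.succAbove) k.castSucc)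
              ((Function.update X x1 (b (X x) (X x1)) ∘ x.succAbove) (Fin.last p))
        else 0)]
    enter [2, 1, 2, x]
    rw [Fin.sum_univ_castSucc]
  have hnl : ∀ x1 : Fin (p+2), ((p + 1 : ℕ) < (x1 : ℕ)) ↔ False :=
    fun x1 => iff_false_intro (by have := x1.isLt; omega)
  have htr : ∀ x : Fin (p+1), ((x : ℕ) < p + 1) ↔ True := fun x => iff_true_intro x.isLt
  simp only [Fin.coe_castSucc, Fin.val_last, hnl, htr, if_true, if_false,
    Finset.sum_const_zero, add_zero]
  simp only [hup1, hup2, hup3, hup4, hfun1, hfun2]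
  rw [Finset.sum_add_distrib]
  rw [Fin.sum_univ_castSucc (f := fun x : Fin (p+1) => ((-1:ℤ)) ^ ((x:ℕ) + 1) •
    (φ ((fun k => X k.castSucc) ∘ x.succAbove)) ((b (X x.castSucc)) (X (Fin.last (p+1)))))]
  have hlastcomp : (fun k : Fin (p+1) => X k.castSucc) ∘ (Fin.last p).succAbove
      = fun k : Fin p => X k.castSucc.castSucc := by
    funext k; simp only [Function.comp_apply, Fin.succAbove_last, Fin.coe_castSucc]
  simp only [hlastcomp, Fin.coe_castSucc, Fin.val_last]
  simp only [smul_sub, Finset.sum_sub_distrib]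
  simp only [pow_succ, mul_smul, neg_smul, one_smul, smul_neg, neg_neg,
    Finset.sum_neg_distrib]
  abel
end

section
/- Let V be a 3-Leibniz algebra with associated Leibniz algebra L = V ⊗ V, D : L → End(V) determined by D(x⊗y)(z) = [x,y,z], and ι : End(V) → End(L) the linear map ι(ψ)(x⊗y) = ψ(x)⊗y + x⊗ψ(y) (written ι(ψ)(X) = ψ·X). Then ι is a morphism of L-representations: for all X ∈ L and ψ ∈ End(V), [X, ι(ψ)] = ι([X,ψ]) and [ι(ψ), X] = ι([ψ,X]), where End(V) carries the actions [X,ψ] = D(X)∘ψ − ψ∘D(X), [ψ,X] = ψ∘D(X) − D(X)∘ψ − D(ψ·X), and End(L) carries the actions [X,Ψ](Y) = [X,Ψ(Y)] − Ψ([X,Y]) and [Ψ,X](Y) = −[X,Ψ(Y)] − [Ψ(X),Y] + Ψ([X,Y]). -/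
open TensorProduct

/-- For a 3-Leibniz algebra `V` with associated Leibniz algebra
`L = V ⊗ V`, the map `ι : End(V) → End(L)`, `ι(ψ)(x⊗y) = ψ(x)⊗y + x⊗ψ(y)`, is a
morphism of `L`-representations: `[X, ι(ψ)] = ι([X,ψ])` and `[ι(ψ), X] = ι([ψ,X])`. -/
theorem iota_morphism_of_representations
    (V : Type*) [AddCommGroup V] [Module ℝ V]
    (t : V →ₗ[ℝ] V →ₗ[ℝ] V →ₗ[ℝ] V)
    (hFI : ∀ x y u v z : V,
      t x y (t u v z) = t (t x y u) v z + t u (t x y v) z + t u v (t x y z))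
    (B : TensorProduct ℝ V V →ₗ[ℝ] TensorProduct ℝ V V →ₗ[ℝ] TensorProduct ℝ V V)
    (hB : ∀ x y u v : V,
      B (x ⊗ₜ[ℝ] y) (u ⊗ₜ[ℝ] v) = (t x y u) ⊗ₜ[ℝ] v + u ⊗ₜ[ℝ] (t x y v))
    (D : TensorProduct ℝ V V →ₗ[ℝ] Module.End ℝ V)
    (hD : ∀ x y z : V, D (x ⊗ₜ[ℝ] y) z = t x y z)
    (ι : Module.End ℝ V →ₗ[ℝ] Module.End ℝ (TensorProduct ℝ V V))
    (hι : ∀ (ψ : Module.End ℝ V) (x y : V),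
      ι ψ (x ⊗ₜ[ℝ] y) = (ψ x) ⊗ₜ[ℝ] y + x ⊗ₜ[ℝ] (ψ y)) :
    ∀ (X : TensorProduct ℝ V V) (ψ : Module.End ℝ V),
      (B X ∘ₗ ι ψ - ι ψ ∘ₗ B X = ι (D X ∘ₗ ψ - ψ ∘ₗ D X)) ∧
      (ι ψ ∘ₗ B X - B X ∘ₗ ι ψ - B (ι ψ X) =
        ι (ψ ∘ₗ D X - D X ∘ₗ ψ - D (ι ψ X))) := by
  intro X ψ
  induction X using TensorProduct.induction_on with
  | zero =>
    constructor <;>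
    · refine TensorProduct.ext' fun u v => ?_
      simp
  | tmul x y =>
    constructor <;>
    · refine TensorProduct.ext' fun u v => ?_
      simp only [LinearMap.sub_apply, LinearMap.add_apply, LinearMap.comp_apply,
        LinearMap.coe_comp, Function.comp_apply, hB, hD, hι, map_add, map_sub,
        tmul_add, add_tmul, sub_tmul, tmul_sub]
      abel
  | add a b ha hb =>
    obtain ⟨ha1, ha2⟩ := ha
    obtain ⟨hb1, hb2⟩ := hb
    constructor
    · calc B (a + b) ∘ₗ ι ψ - ι ψ ∘ₗ B (a + b)
          = (B a ∘ₗ ι ψ - ι ψ ∘ₗ B a) + (B b ∘ₗ ι ψ - ι ψ ∘ₗ B b) := by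
            rw [map_add]
            simp only [LinearMap.add_comp, LinearMap.comp_add]
            abel
        _ = ι (D a ∘ₗ ψ - ψ ∘ₗ D a) + ι (D b ∘ₗ ψ - ψ ∘ₗ D b) := by rw [ha1, hb1]
        _ = ι (D (a + b) ∘ₗ ψ - ψ ∘ₗ D (a + b)) := by
            rw [← map_add]
            congr 1
            rw [map_add]
            simp only [LinearMap.add_comp, LinearMap.comp_add]
            abel
    · calc ι ψ ∘ₗ B (a + b) - B (a + b) ∘ₗ ι ψ - B (ι ψ (a + b))
          = (ι ψ ∘ₗ B a - B a ∘ₗ ι ψ - B (ι ψ a))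
            + (ι ψ ∘ₗ B b - B b ∘ₗ ι ψ - B (ι ψ b)) := by
            rw [map_add, map_add, map_add]
            simp only [LinearMap.add_comp, LinearMap.comp_add]
            abel
        _ = ι (ψ ∘ₗ D a - D a ∘ₗ ψ - D (ι ψ a))
            + ι (ψ ∘ₗ D b - D b ∘ₗ ψ - D (ι ψ b)) := by rw [ha2, hb2]
        _ = ι (ψ ∘ₗ D (a + b) - D (a + b) ∘ₗ ψ - D (ι ψ (a + b))) := by
            rw [← map_add]
            congr 1
            rw [map_add, map_add, map_add]
            simp only [LinearMap.add_comp, LinearMap.comp_add]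
            abel
end

section
/- Let V be a 3-Leibniz algebra with associated Leibniz algebra L = V ⊗ V and D : L → End(V) determined by D(x⊗y)(z) = [x,y,z], with End(V) the representation of L with actions [X,ψ] = D(X)∘ψ − ψ∘D(X) and [ψ,X] = ψ∘D(X) − D(X)∘ψ − D(ψ·X). Then the 1-cochain D is a cocycle: [X,D(Y)] + [D(X),Y] − D([X,Y]) = 0 for all X, Y ∈ L. Moreover, it is a coboundary: for the identity endomorphism 𝟙 ∈ End(V), the 0-cochain differential satisfies d𝟙(X) = −[𝟙,X] = 2·D(X) for all X ∈ L, so that D = ½ d𝟙. -/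
open TensorProduct

/-- For a 3-Leibniz algebra `V` with associated Leibniz algebra
`L = V ⊗ V`, the 1-cochain `D` is a cocycle, `[X,D(Y)] + [D(X),Y] − D([X,Y]) = 0`,
and is a coboundary: `d𝟙(X) = −[𝟙,X] = 2 D(X)`, so `D = ½ d𝟙`. -/
theorem D_is_cocycle_and_coboundary
    (V : Type*) [AddCommGroup V] [Module ℝ V]
    (t : V →ₗ[ℝ] V →ₗ[ℝ] V →ₗ[ℝ] V)
    (hFI : ∀ x y u v z : V,
      t x y (t u v z) = t (t x y u) v z + t u (t x y v) z + t u v (t x y z))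
    (B : TensorProduct ℝ V V →ₗ[ℝ] TensorProduct ℝ V V →ₗ[ℝ] TensorProduct ℝ V V)
    (hB : ∀ x y u v : V,
      B (x ⊗ₜ[ℝ] y) (u ⊗ₜ[ℝ] v) = (t x y u) ⊗ₜ[ℝ] v + u ⊗ₜ[ℝ] (t x y v))
    (D : TensorProduct ℝ V V →ₗ[ℝ] Module.End ℝ V)
    (hD : ∀ x y z : V, D (x ⊗ₜ[ℝ] y) z = t x y z)
    (act : Module.End ℝ V → (TensorProduct ℝ V V →ₗ[ℝ] TensorProduct ℝ V V))
    (hact : ∀ (ψ : Module.End ℝ V) (x y : V),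
      act ψ (x ⊗ₜ[ℝ] y) = (ψ x) ⊗ₜ[ℝ] y + x ⊗ₜ[ℝ] (ψ y)) :
    (∀ X Y : TensorProduct ℝ V V,
        (D X ∘ₗ D Y - D Y ∘ₗ D X)
          + (D X ∘ₗ D Y - D Y ∘ₗ D X - D (act (D X) Y))
          - D (B X Y) = 0) ∧
    (∀ X : TensorProduct ℝ V V,
        -(LinearMap.id ∘ₗ D X - D X ∘ₗ LinearMap.id - D (act LinearMap.id X)) =
          (2 : ℝ) • D X) := by

  -- act (D X) Y = B X Y
  have h1 : ∀ X Y : TensorProduct ℝ V V, act (D X) Y = B X Y := by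
    intro X Y
    induction Y using TensorProduct.induction_on with
    | zero => simp
    | tmul u v =>
      rw [hact]
      induction X using TensorProduct.induction_on with
      | zero => simp
      | tmul x y => simp [hB, hD]
      | add X1 X2 h1 h2 =>
        simp only [map_add, LinearMap.add_apply] at h1 h2 ⊢
        rw [← h1, ← h2, add_tmul, tmul_add]
        abel
    | add Y1 Y2 h1 h2 => simp [map_add, h1, h2]
  -- commutator identity
  have h2 : ∀ X Y : TensorProduct ℝ V V,
      D X ∘ₗ D Y - D Y ∘ₗ D X = D (B X Y) := by
    intro X Y
    induction X using TensorProduct.induction_on with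
    | zero => simp
    | tmul x y =>
      induction Y using TensorProduct.induction_on with
      | zero => simp
      | tmul u v =>
        ext z
        simp only [LinearMap.sub_apply, LinearMap.comp_apply, hD, hB, map_add,
          LinearMap.add_apply]
        rw [hFI x y u v z]
        abel
      | add Y1 Y2 hY1 hY2 =>
        simp only [map_add, LinearMap.add_apply] at hY1 hY2 ⊢
        rw [← hY1, ← hY2]
        ext z; simp; abel
    | add X1 X2 hX1 hX2 =>
      simp only [map_add, LinearMap.add_apply] at hX1 hX2 ⊢
      rw [← hX1, ← hX2]
      ext z; simp; abel
  have h3 : ∀ X : TensorProduct ℝ V V, act LinearMap.id X = (2 : ℝ) • X := by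
    intro X
    induction X using TensorProduct.induction_on with
    | zero => simp
    | tmul x y => rw [hact]; simp [two_smul]
    | add X1 X2 hX1 hX2 => simp [map_add, hX1, hX2, smul_add]
  constructor
  · intro X Y
    rw [h1, h2]
    abel
  · intro X
    rw [h3, map_smul]
    ext z
    simp [two_smul]
end

section
/- Let 𝔤 be a real Lie algebra with a nondegenerate symmetric bilinear form κ that is ad-invariant (κ([X,Y],Z) = −κ(Y,[X,Z]) for all X, Y, Z ∈ 𝔤), let V be a 𝔤-module, let V* be the dual 𝔤-module with action (X·α)(v) = −α(X·v), and let 𝒟 : V × V* → 𝔤 be a bilinear map satisfying κ(X, 𝒟(v,α)) = α(X·v) for all X ∈ 𝔤, v ∈ V, α ∈ V*. Then the bilinear bracket on V ⊗ V* determined on pure tensors by [v⊗α, w⊗β] = (𝒟(v,α)·w)⊗β + w⊗(𝒟(v,α)·β) satisfies the left Leibniz identity [X,[Y,Z]] = [[X,Y],Z] + [Y,[X,Z]] for all X, Y, Z ∈ V ⊗ V*; hence V ⊗ V* is a (left) Leibniz algebra. -/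
open TensorProduct

/-- Faulkner construction: For a real metric Lie algebra `(𝔤, κ)`, a
`𝔤`-module `V` with dual module `V*` and `𝒟 : V × V* → 𝔤` defined by
`κ(X, 𝒟(v,α)) = α(X·v)`, the bracket
`[v⊗α, w⊗β] = (𝒟(v,α)·w)⊗β + w⊗(𝒟(v,α)·β)` on `V ⊗ V*` satisfies the left Leibniz
identity; hence `V ⊗ V*` is a (left) Leibniz algebra. -/
theorem faulkner_bracket_is_leibniz
    (𝔤 V : Type*) [AddCommGroup 𝔤] [Module ℝ 𝔤] [AddCommGroup V] [Module ℝ V]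
    (bg : 𝔤 →ₗ[ℝ] 𝔤 →ₗ[ℝ] 𝔤)
    (hskew : ∀ X Y : 𝔤, bg X Y = - bg Y X)
    (hjac : ∀ X Y Z : 𝔤, bg X (bg Y Z) = bg (bg X Y) Z + bg Y (bg X Z))
    (κ : 𝔤 →ₗ[ℝ] 𝔤 →ₗ[ℝ] ℝ)
    (hκsymm : ∀ X Y : 𝔤, κ X Y = κ Y X)
    (hκnd : ∀ X : 𝔤, (∀ Y : 𝔤, κ X Y = 0) → X = 0)
    (hκinv : ∀ X Y Z : 𝔤, κ (bg X Y) Z = - κ Y (bg X Z))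
    (ρ : 𝔤 →ₗ[ℝ] V →ₗ[ℝ] V)
    (hρ : ∀ X Y : 𝔤, ρ (bg X Y) = ρ X ∘ₗ ρ Y - ρ Y ∘ₗ ρ X)
    (𝒟 : V →ₗ[ℝ] Module.Dual ℝ V →ₗ[ℝ] 𝔤)
    (h𝒟 : ∀ (X : 𝔤) (v : V) (α : Module.Dual ℝ V), κ X (𝒟 v α) = α (ρ X v))
    (B : TensorProduct ℝ V (Module.Dual ℝ V) →ₗ[ℝ]
         TensorProduct ℝ V (Module.Dual ℝ V) →ₗ[ℝ]
         TensorProduct ℝ V (Module.Dual ℝ V))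
    (hB : ∀ (v w : V) (α β : Module.Dual ℝ V),
      B (v ⊗ₜ[ℝ] α) (w ⊗ₜ[ℝ] β) =
        (ρ (𝒟 v α) w) ⊗ₜ[ℝ] β + w ⊗ₜ[ℝ] (-(β ∘ₗ ρ (𝒟 v α)))) :
    ∀ X Y Z : TensorProduct ℝ V (Module.Dual ℝ V),
      B X (B Y Z) = B (B X Y) Z + B Y (B X Z) := by
  -- the induced action of 𝔤 on V ⊗ V*
  set σ : 𝔤 → (TensorProduct ℝ V (Module.Dual ℝ V) →ₗ[ℝ]
      TensorProduct ℝ V (Module.Dual ℝ V)) :=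
    fun X => LinearMap.rTensor (Module.Dual ℝ V) (ρ X) +
      LinearMap.lTensor V (-(ρ X).dualMap) with hσ
  have hσt : ∀ (X : 𝔤) (w : V) (β : Module.Dual ℝ V),
      σ X (w ⊗ₜ[ℝ] β) = (ρ X w) ⊗ₜ[ℝ] β + w ⊗ₜ[ℝ] (-(β ∘ₗ ρ X)) := by
    intro X w β
    have hd : (-(ρ X).dualMap) β = -(β ∘ₗ ρ X) := by
      ext u; simp
    rw [hσ]
    simp only [LinearMap.add_apply, LinearMap.rTensor_tmul, LinearMap.lTensor_tmul, hd]
  -- B on a pure tensor is the action of 𝒟 v α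
  have hBσ : ∀ (v : V) (α : Module.Dual ℝ V), B (v ⊗ₜ[ℝ] α) = σ (𝒟 v α) := by
    intro v α
    apply TensorProduct.ext'
    intro w β
    rw [hB, hσt]
  -- σ is a Lie algebra action
  have hσLie : ∀ X Y : 𝔤, σ (bg X Y) + (σ Y).comp (σ X) = (σ X).comp (σ Y) := by
    intro X Y
    apply TensorProduct.ext'
    intro w β
    have h1 : ρ (bg X Y) w = ρ X (ρ Y w) - ρ Y (ρ X w) := by
      rw [hρ]; rfl
    have h2 : -(β ∘ₗ ρ (bg X Y)) =
        (-((-(β ∘ₗ ρ Y)) ∘ₗ ρ X)) - (-((-(β ∘ₗ ρ X)) ∘ₗ ρ Y)) := by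
      ext u
      simp only [hρ, LinearMap.neg_apply, LinearMap.sub_apply, LinearMap.comp_apply,
        map_sub, neg_sub, neg_neg]
    simp only [LinearMap.add_apply, LinearMap.comp_apply, hσt, h1, h2, map_add, map_sub,
      TensorProduct.add_tmul, TensorProduct.sub_tmul, TensorProduct.tmul_add,
      TensorProduct.tmul_sub]
    abel
  -- equivariance of 𝒟
  have hequiv : ∀ (X : 𝔤) (v : V) (α : Module.Dual ℝ V),
      𝒟 (ρ X v) α + 𝒟 v (-(α ∘ₗ ρ X)) = bg X (𝒟 v α) := by
    intro X v α
    have key : ∀ Y : 𝔤,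
        κ (𝒟 (ρ X v) α + 𝒟 v (-(α ∘ₗ ρ X)) - bg X (𝒟 v α)) Y = 0 := by
      intro Y
      rw [hκsymm]
      have h1 : κ Y (𝒟 (ρ X v) α) = α (ρ Y (ρ X v)) := h𝒟 Y (ρ X v) α
      have h2 : κ Y (𝒟 v (-(α ∘ₗ ρ X))) = -(α (ρ X (ρ Y v))) := by
        have e : 𝒟 v (-(α ∘ₗ ρ X)) = -(𝒟 v (α ∘ₗ ρ X)) := map_neg _ _
        rw [e, map_neg, h𝒟]
        rfl
      have h3 : κ Y (bg X (𝒟 v α)) = κ (bg Y X) (𝒟 v α) := by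
        rw [hskew Y X, map_neg, LinearMap.neg_apply, hκinv]
        ring
      have h4 : κ (bg Y X) (𝒟 v α) = α (ρ (bg Y X) v) := h𝒟 _ v α
      have h5 : ρ (bg Y X) v = ρ Y (ρ X v) - ρ X (ρ Y v) := by rw [hρ]; rfl
      rw [map_sub, map_add, h1, h2, h3, h4, h5, map_sub]
      ring
    exact sub_eq_zero.mp (hκnd _ key)
  -- σ is additive in the Lie algebra argument
  have σadd : ∀ A C : 𝔤, σ (A + C) = σ A + σ C := by
    intro A C
    apply TensorProduct.ext'
    intro w β
    have hd : -(β ∘ₗ ρ (A + C)) = (-(β ∘ₗ ρ A)) + (-(β ∘ₗ ρ C)) := by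
      ext u
      simp only [LinearMap.neg_apply, LinearMap.add_apply, LinearMap.comp_apply, map_add]
      abel
    rw [hσt, LinearMap.add_apply, hσt, hσt, hd, map_add, LinearMap.add_apply,
      TensorProduct.add_tmul, TensorProduct.tmul_add]
    abel
  intro X Y Z
  induction X using TensorProduct.induction_on with
  | zero => simp
  | tmul v α =>
    induction Y using TensorProduct.induction_on with
    | zero => simp
    | tmul w β =>
      rw [hB v w α β, map_add, LinearMap.add_apply, hBσ, hBσ, hBσ, hBσ,
        ← LinearMap.add_apply, ← σadd, hequiv]
      have h := LinearMap.congr_fun (hσLie (𝒟 v α) (𝒟 w β)) Z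
      simp only [LinearMap.add_apply, LinearMap.comp_apply] at h
      exact h.symm
    | add Y1 Y2 h1 h2 =>
      simp only [map_add, LinearMap.add_apply, h1, h2]
      abel
  | add X1 X2 h1 h2 =>
    simp only [map_add, LinearMap.add_apply, h1, h2]
    abel
end

section
/- Let 𝔤 be a real Lie algebra with a nondegenerate symmetric bilinear form κ that is ad-invariant (κ([X,Y],Z) = −κ(Y,[X,Z]) for all X, Y, Z ∈ 𝔤), let V be a 𝔤-module, let V* be the dual 𝔤-module with action (X·α)(v) = −α(X·v), let 𝒟 : V × V* → 𝔤 be a bilinear map satisfying κ(X, 𝒟(v,α)) = α(X·v) for all X ∈ 𝔤, v ∈ V, α ∈ V*, and equip V ⊗ V* with the bracket determined on pure tensors by [v⊗α, w⊗β] = (𝒟(v,α)·w)⊗β + w⊗(𝒟(v,α)·β). Then the bilinear form on V ⊗ V* determined on pure tensors by ⟨v⊗α, w⊗β⟩ = α(w)·β(v) is invariant under left multiplication: ⟨[Z,X], Y⟩ + ⟨X, [Z,Y]⟩ = 0 for all X, Y, Z ∈ V ⊗ V*. -/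
open TensorProduct

/-- In the Faulkner construction, the bilinear form on `V ⊗ V*`
determined by `⟨v⊗α, w⊗β⟩ = α(w)β(v)` is invariant under left multiplication of the
Leibniz bracket: `⟨[Z,X],Y⟩ + ⟨X,[Z,Y]⟩ = 0`. -/
theorem faulkner_form_left_invariant
    (𝔤 V : Type*) [AddCommGroup 𝔤] [Module ℝ 𝔤] [AddCommGroup V] [Module ℝ V]
    (bg : 𝔤 →ₗ[ℝ] 𝔤 →ₗ[ℝ] 𝔤)
    (hskew : ∀ X Y : 𝔤, bg X Y = - bg Y X)
    (hjac : ∀ X Y Z : 𝔤, bg X (bg Y Z) = bg (bg X Y) Z + bg Y (bg X Z))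
    (κ : 𝔤 →ₗ[ℝ] 𝔤 →ₗ[ℝ] ℝ)
    (hκsymm : ∀ X Y : 𝔤, κ X Y = κ Y X)
    (hκnd : ∀ X : 𝔤, (∀ Y : 𝔤, κ X Y = 0) → X = 0)
    (hκinv : ∀ X Y Z : 𝔤, κ (bg X Y) Z = - κ Y (bg X Z))
    (ρ : 𝔤 →ₗ[ℝ] V →ₗ[ℝ] V)
    (hρ : ∀ X Y : 𝔤, ρ (bg X Y) = ρ X ∘ₗ ρ Y - ρ Y ∘ₗ ρ X)
    (𝒟 : V →ₗ[ℝ] Module.Dual ℝ V →ₗ[ℝ] 𝔤)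
    (h𝒟 : ∀ (X : 𝔤) (v : V) (α : Module.Dual ℝ V), κ X (𝒟 v α) = α (ρ X v))
    (B : TensorProduct ℝ V (Module.Dual ℝ V) →ₗ[ℝ]
         TensorProduct ℝ V (Module.Dual ℝ V) →ₗ[ℝ]
         TensorProduct ℝ V (Module.Dual ℝ V))
    (hB : ∀ (v w : V) (α β : Module.Dual ℝ V),
      B (v ⊗ₜ[ℝ] α) (w ⊗ₜ[ℝ] β) =
        (ρ (𝒟 v α) w) ⊗ₜ[ℝ] β + w ⊗ₜ[ℝ] (-(β ∘ₗ ρ (𝒟 v α))))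
    (G : TensorProduct ℝ V (Module.Dual ℝ V) →ₗ[ℝ]
         TensorProduct ℝ V (Module.Dual ℝ V) →ₗ[ℝ] ℝ)
    (hG : ∀ (v w : V) (α β : Module.Dual ℝ V),
      G (v ⊗ₜ[ℝ] α) (w ⊗ₜ[ℝ] β) = α w * β v) :
    ∀ X Y Z : TensorProduct ℝ V (Module.Dual ℝ V),
      G (B Z X) Y + G X (B Z Y) = 0 := by
  intro X Y Z
  induction Z using TensorProduct.induction_on with
  | zero => simp
  | add a b ha hb => simp only [map_add, LinearMap.add_apply]; linarith
  | tmul u γ =>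
    induction X using TensorProduct.induction_on with
    | zero => simp
    | add a b ha hb => simp only [map_add, LinearMap.add_apply]; linarith
    | tmul v α =>
      induction Y using TensorProduct.induction_on with
      | zero => simp
      | add a b ha hb => simp only [map_add, LinearMap.add_apply]; linarith
      | tmul w β =>
        simp only [hB, map_add, LinearMap.add_apply, hG, LinearMap.neg_apply,
          LinearMap.comp_apply]
        ring
end

section
/- Let V = ℝ⁴ with its standard inner product ⟨·,·⟩ and standard orthonormal basis e₁, e₂, e₃, e₄, and let ε_{abcd} be the totally antisymmetric symbol with ε₁₂₃₄ = 1. For each t ∈ ℝ define the trilinear bracket [·,·,·]_t on V by [e_a, e_b, e_c]_t = Σ_{d=1}^{4} ε_{abcd} e_d + t(δ_{bc} e_a − δ_{ac} e_b). Then for every t ∈ ℝ this bracket satisfies: (i) the fundamental identity [x,y,[u,v,z]_t]_t = [[x,y,u]_t,v,z]_t + [u,[x,y,v]_t,z]_t + [u,v,[x,y,z]_t]_t; (ii) the orthogonality condition ⟨[x,y,u]_t, v⟩ + ⟨u, [x,y,v]_t⟩ = 0; and (iii) the symmetry condition ⟨[x,y,u]_t, v⟩ = ⟨[u,v,x]_t,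 y⟩, for all x, y, u, v, z ∈ V. In particular, [·,·,·]_t is a one-parameter family of metric 3-Leibniz (Cherkis–Sämann) algebras which at t = 0 is the simple euclidean 3-Lie algebra S₄. -/
/-- The totally antisymmetric symbol `ε_{abcd}` on `Fin 4`, with `ε 0 1 2 3 = 1`,
realised as the determinant of the corresponding generalised permutation matrix. -/
noncomputable def epsilon4 (a b c d : Fin 4) : ℝ :=
  Matrix.det (Matrix.of fun i j : Fin 4 => if ![a, b, c, d] i = j then (1 : ℝ) else 0)

/-- The standard basis vector `e_a` of `ℝ⁴`. -/
def stdBasis4 (a : Fin 4) : Fin 4 → ℝ := Pi.single a 1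

/-- auxiliary lemmas -/
lemma S4aux_basis_expand (x : Fin 4 → ℝ) : x = ∑ a, x a • stdBasis4 a := by
  funext i
  simp [stdBasis4, Finset.sum_apply, Pi.single_apply]

lemma S4aux_fin4_cases : ∀ j : Fin 4, j = 0 ∨ j = 1 ∨ j = 2 ∨ j = 3 := by decide

lemma S4aux_eps_cast (a b c d : Fin 4) :
    epsilon4 a b c d =
      (((Matrix.of fun i j : Fin 4 => if ![a,b,c,d] i = j then (1:ℤ) else 0).det : ℤ) : ℝ) := by
  have h := RingHom.map_det (Int.castRingHom ℝ)
    (Matrix.of fun i j : Fin 4 => if ![a,b,c,d] i = j then (1:ℤ) else 0)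
  rw [epsilon4]
  rw [show ((((Matrix.of fun i j : Fin 4 => if ![a,b,c,d] i = j then (1:ℤ) else 0).det : ℤ)) : ℝ)
      = (Int.castRingHom ℝ) ((Matrix.of fun i j : Fin 4 => if ![a,b,c,d] i = j then (1:ℤ) else 0).det) from rfl, h]
  congr 1
  ext i j
  simp [Matrix.map, apply_ite (Int.cast : ℤ → ℝ)]

lemma S4aux_eps_formula (a b c d : Fin 4) :
    epsilon4 a b c d =
      (((b:ℕ):ℝ)-((a:ℕ):ℝ))*(((c:ℕ):ℝ)-((a:ℕ):ℝ))*(((d:ℕ):ℝ)-((a:ℕ):ℝ))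
        *(((c:ℕ):ℝ)-((b:ℕ):ℝ))*(((d:ℕ):ℝ)-((b:ℕ):ℝ))*(((d:ℕ):ℝ)-((c:ℕ):ℝ)) / 12 := by
  have h : ∀ a b c d : Fin 4,
      (Matrix.det (Matrix.of fun i j : Fin 4 => if ![a,b,c,d] i = j then (1:ℤ) else 0)) * 12
      = ((b:ℤ)-(a:ℤ))*((c:ℤ)-(a:ℤ))*((d:ℤ)-(a:ℤ))*((c:ℤ)-(b:ℤ))*((d:ℤ)-(b:ℤ))*((d:ℤ)-(c:ℤ)) := by
    decide
  have h2 := congrArg (fun z : ℤ => (z : ℝ)) (h a b c d)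
  rw [S4aux_eps_cast a b c d]
  push_cast at h2 ⊢
  linarith

lemma S4aux_v0 : ((0 : Fin 4) : ℕ) = 0 := rfl
lemma S4aux_v1 : ((1 : Fin 4) : ℕ) = 1 := rfl
lemma S4aux_v2 : ((2 : Fin 4) : ℕ) = 2 := rfl
lemma S4aux_v3 : ((3 : Fin 4) : ℕ) = 3 := rfl


set_option maxHeartbeats 12000000 in
/-- For every `t ∈ ℝ`, the trilinear bracket on `ℝ⁴` determined on the
standard orthonormal basis by
`[e_a, e_b, e_c]_t = Σ_d ε_{abcd} e_d + t (δ_{bc} e_a − δ_{ac} e_b)`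
satisfies the fundamental identity, the orthogonality condition and the symmetry
condition with respect to the standard inner product; i.e. it is a one-parameter
family of metric 3-Leibniz (Cherkis–Sämann) algebras deforming the simple euclidean
3-Lie algebra `S₄` at `t = 0`. -/
theorem S4_one_parameter_deformation (t : ℝ)
    (T : (Fin 4 → ℝ) →ₗ[ℝ] (Fin 4 → ℝ) →ₗ[ℝ] (Fin 4 → ℝ) →ₗ[ℝ] (Fin 4 → ℝ))
    (hT : ∀ a b c : Fin 4,
      T (stdBasis4 a) (stdBasis4 b) (stdBasis4 c) =
        (∑ d : Fin 4, epsilon4 a b c d • stdBasis4 d)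
          + t • ((if b = c then (1 : ℝ) else 0) • stdBasis4 a
              - (if a = c then (1 : ℝ) else 0) • stdBasis4 b)) :
    (∀ x y u v z : Fin 4 → ℝ,
        T x y (T u v z) = T (T x y u) v z + T u (T x y v) z + T u v (T x y z)) ∧
    (∀ x y u v : Fin 4 → ℝ,
        (∑ i, T x y u i * v i) + (∑ i, u i * T x y v i) = 0) ∧
    (∀ x y u v : Fin 4 → ℝ,
        (∑ i, T x y u i * v i) = ∑ i, T u v x i * y i) := by
  have key : ∀ a b c i : Fin 4, T (stdBasis4 a) (stdBasis4 b) (stdBasis4 c) i =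
      epsilon4 a b c i + t * ((if b = c then (1:ℝ) else 0) * (if i = a then 1 else 0)
        - (if a = c then (1:ℝ) else 0) * (if i = b then 1 else 0)) := by
    intro a b c i
    rw [hT]
    simp only [Pi.add_apply, Pi.smul_apply, Pi.sub_apply, Finset.sum_apply,
      stdBasis4, Pi.single_apply, smul_eq_mul, mul_ite, ite_mul, mul_one, mul_zero,
      zero_mul, one_mul, Finset.sum_ite_eq, Finset.mem_univ, if_true,
      apply_ite (fun f : Fin 4 → ℝ => f i), Pi.zero_apply]
  have coord : ∀ (x y z : Fin 4 → ℝ) (i : Fin 4),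
      T x y z i = (∑ a, ∑ b, ∑ c, x a * y b * z c * epsilon4 a b c i)
        + t * ((∑ j, y j * z j) * x i - (∑ j, x j * z j) * y i) := by
    intro x y z i
    have expand : T x y z i = ∑ a, ∑ b, ∑ c,
        x a * y b * z c * (T (stdBasis4 a) (stdBasis4 b) (stdBasis4 c) i) := by
      conv_lhs => rw [S4aux_basis_expand x, S4aux_basis_expand y, S4aux_basis_expand z]
      simp only [map_sum, map_smul, LinearMap.sum_apply, LinearMap.smul_apply,
        Finset.sum_apply, Pi.smul_apply, smul_eq_mul]
      simp only [Fin.sum_univ_four]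
      ring
    rw [expand]
    simp only [key]
    rcases S4aux_fin4_cases i with rfl | rfl | rfl | rfl <;>
    · simp only [Fin.sum_univ_four, Fin.isValue, Fin.reduceEq, if_true, if_false, reduceIte]
      ring
  refine ⟨?_, ?_, ?_⟩
  · intro x y u v z
    funext i
    rcases S4aux_fin4_cases i with rfl | rfl | rfl | rfl <;>
    · simp only [Pi.add_apply, coord, Fin.sum_univ_four, S4aux_eps_formula,
        S4aux_v0, S4aux_v1, S4aux_v2, S4aux_v3]
      norm_num
      ring
  · intro x y u v
    simp only [coord, Fin.sum_univ_four, S4aux_eps_formula,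
      S4aux_v0, S4aux_v1, S4aux_v2, S4aux_v3]
    norm_num
    ring
  · intro x y u v
    simp only [coord, Fin.sum_univ_four, S4aux_eps_formula,
      S4aux_v0, S4aux_v1, S4aux_v2, S4aux_v3]
    norm_num
    ring
end
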